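/- In the fermionic Gaussianity QRT on n qubits, for each even λ (0 ≤ λ ≤ 2n) the coefficient τ_λ equals C(n, λ/2) / (C(2n, λ) · 2^n), where C denotes the binomial coefficient; for odd λ, the GFD purity of |0⟩^{⊗n} on V_λ vanishes (τ_λ = 0). -/

import Mathlib

/-!
STATEMENT 11: Fermionic Gaussianity QRT on n qubits. Majoranas `c_1,…,c_{2n}` are
defined via Jordan–Wigner; `V_λ` is spanned by normalized products of `λ` distinct
Majoranas, `d_λ = C(2n,λ)`. For even `λ`, `τ_λ = C(n,λ/2)/(C(2n,λ)·2^n)`; for odd `λ`,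
the GFD purity of `|0⟩^{⊗n}` on `V_λ` vanishes.
-/

open Matrix

/-- The four Pauli matrices: I, X, Y, Z. -/
noncomputable def pauli : Fin 4 → Matrix (Fin 2) (Fin 2) ℂ :=
  ![1, !![0, 1; 1, 0], !![0, -Complex.I; Complex.I, 0], !![1, 0; 0, -1]]

/-- The (unnormalized) Pauli string `P_{f 1} ⊗ ⋯ ⊗ P_{f n}`. -/
noncomputable def pauliString {n : ℕ} (f : Fin n → Fin 4) :
    Matrix (Fin n → Fin 2) (Fin n → Fin 2) ℂ :=
  Matrix.of fun i j => ∏ k, pauli (f k) (i k) (j k)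

/-- The projector `|0⟩⟨0|^{⊗n}`. -/
noncomputable def zeroProj (n : ℕ) : Matrix (Fin n → Fin 2) (Fin n → Fin 2) ℂ :=
  Matrix.of fun i j => if i = (fun _ => 0) ∧ j = (fun _ => 0) then 1 else 0

/-- Jordan–Wigner Majorana operator `c_m` (m = 0,…,2n−1):
`c_{2k} = Z^{⊗k} X`, `c_{2k+1} = Z^{⊗k} Y` (identity on the remaining qubits). -/
noncomputable def majorana (n : ℕ) (m : Fin (2 * n)) :
    Matrix (Fin n → Fin 2) (Fin n → Fin 2) ℂ :=
  pauliString (fun q =>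
    if (q : ℕ) < (m : ℕ) / 2 then 3
    else if (q : ℕ) = (m : ℕ) / 2 then (if (m : ℕ) % 2 = 0 then 1 else 2)
    else 0)

/-- Ordered product of the Majoranas indexed by the finite set `S`. -/
noncomputable def majProd (n : ℕ) (S : Finset (Fin (2 * n))) :
    Matrix (Fin n → Fin 2) (Fin n → Fin 2) ℂ :=
  ((S.sort (· ≤ ·)).map (majorana n)).prod

/-- GFD purity of `ρ` on `V_λ` (the span of normalized products of `λ` distinct
Majoranas). -/
noncomputable def PpurF (n : ℕ) (lam : ℕ)
    (ρ : Matrix (Fin n → Fin 2) (Fin n → Fin 2) ℂ) : ℝ :=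
  ∑ S ∈ Finset.univ.filter (fun S : Finset (Fin (2 * n)) => S.card = lam),
    Complex.normSq (((((Real.sqrt (2 ^ n) : ℝ)⁻¹ : ℂ) • majProd n S) * ρ).trace)

/-!
The entry `⟨0|c_S|0⟩` of a product of Pauli strings factors over the qubits, and on each qubit
it is an entry of a product of single-qubit Paulis. Every Pauli sends a basis vector to a
unimodular multiple of a basis vector, flipping it exactly when it is `X` or `Y`; hence
`|⟨0|c_S|0⟩|² = 1` if every qubit receives an even number of `X`/`Y` factors and `0` otherwise.
Under Jordan–Wigner, `c_m` carries `X` or `Y` only on qubit `⌊m/2⌋`, so the condition says that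
`S` is a union of pairs `{2k, 2k+1}`. There are `C(n, λ/2)` such sets of size `λ` for even `λ`
and none for odd `λ`, and each contributes `1/2^n` to the purity.
-/

namespace Matrix

variable {ι α R : Type*} [Fintype ι] [CommSemiring R]

/-- The tensor product `⨂ₖ A k`, written in the product basis indexed by `ι → α`. -/
def piKronecker (A : ι → Matrix α α R) : Matrix (ι → α) (ι → α) R :=
  of fun i j => ∏ k, A k (i k) (j k)

theorem piKronecker_one [DecidableEq α] :
    piKronecker (fun _ : ι => (1 : Matrix α α R)) = 1 := by
  ext i j
  by_cases hij : i = j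
  · subst hij
    simp [piKronecker]
  · obtain ⟨k, hk⟩ := Function.ne_iff.mp hij
    rw [one_apply_ne hij]
    exact Finset.prod_eq_zero (Finset.mem_univ k) (one_apply_ne hk)

theorem piKronecker_mul [DecidableEq ι] [Fintype α] (A B : ι → Matrix α α R) :
    piKronecker (fun k => A k * B k) = piKronecker A * piKronecker B := by
  ext i j
  simp only [piKronecker, of_apply, mul_apply, Finset.prod_univ_sum, Fintype.piFinset_univ,
    Finset.prod_mul_distrib]

theorem list_prod_map_piKronecker [DecidableEq ι] [Fintype α] [DecidableEq α] {γ : Type*}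
    (A : γ → ι → Matrix α α R) (l : List γ) :
    (l.map fun x => piKronecker (A x)).prod = piKronecker fun k => (l.map fun x => A x k).prod := by
  induction l with
  | nil => exact piKronecker_one.symm
  | cons x l ih => simp only [List.map_cons, List.prod_cons, ih, piKronecker_mul]

end Matrix

def pauliFlip (a : Fin 4) : Fin 2 := if a = 1 ∨ a = 2 then 1 else 0

theorem pauli_mulVec_single (a : Fin 4) (c : Fin 2) (z : ℂ) :
    pauli a *ᵥ Pi.single c z = Pi.single (c + pauliFlip a) (pauli a (c + pauliFlip a) c * z) := by
  ext i
  fin_cases a <;> fin_cases c <;> fin_cases i <;> simp [pauli, pauliFlip, mulVec, dotProduct]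

theorem normSq_pauli_apply_add_pauliFlip (a : Fin 4) (c : Fin 2) :
    Complex.normSq (pauli a (c + pauliFlip a) c) = 1 := by
  fin_cases a <;> fin_cases c <;> simp [pauli, pauliFlip]

theorem list_prod_map_pauli_mulVec_single (l : List (Fin 4)) :
    ∃ z : ℂ, Complex.normSq z = 1 ∧
      (l.map pauli).prod *ᵥ Pi.single 0 1 = Pi.single (l.map pauliFlip).sum z := by
  induction l with
  | nil =>
    exact ⟨1, by simp, by simp only [List.map_nil, List.prod_nil, List.sum_nil, one_mulVec]⟩
  | cons a l ih =>
    obtain ⟨z, hz, hl⟩ := ih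
    set c := (l.map pauliFlip).sum
    refine ⟨pauli a (c + pauliFlip a) c * z, ?_, ?_⟩
    · rw [map_mul, normSq_pauli_apply_add_pauliFlip, hz, one_mul]
    · rw [List.map_cons, List.prod_cons, ← mulVec_mulVec, hl, pauli_mulVec_single,
        List.map_cons, List.sum_cons, add_comm]

theorem normSq_list_prod_map_pauli_apply_zero_zero (l : List (Fin 4)) :
    Complex.normSq ((l.map pauli).prod 0 0) = if (l.map pauliFlip).sum = 0 then 1 else 0 := by
  obtain ⟨z, hz, hl⟩ := list_prod_map_pauli_mulVec_single l
  have := congrFun hl 0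
  rw [mulVec_single_one, col_apply] at this
  rw [this]
  split_ifs with h
  · rw [h, Pi.single_eq_same, hz]
  · rw [Pi.single_eq_of_ne' h, map_zero]

section TwoToOne

open Finset

variable {α β : Type*} [DecidableEq β]

def EvenFibers (f : α → β) (S : Finset α) : Prop := ∀ b, Even #(S.filter (f · = b))

instance [Fintype β] (f : α → β) : DecidablePred (EvenFibers f) := fun _ =>
  Fintype.decidableForallFintype

variable {f : α → β}

theorem EvenFibers.even_card {S : Finset α} (hS : EvenFibers f S) : Even #S := by
  rw [card_eq_sum_card_image f S]
  exact even_sum _ fun b _ => hS b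

variable [Fintype α]

theorem filter_filter_mem_of_mem {T : Finset β} {b : β} (hb : b ∈ T) :
    (univ.filter (f · ∈ T)).filter (f · = b) = univ.filter (f · = b) := by
  rw [filter_filter]
  exact filter_congr fun a _ => ⟨And.right, fun h => ⟨h ▸ hb, h⟩⟩

variable (hf : ∀ b, #(univ.filter (f · = b)) = 2)
include hf

theorem card_filter_mem (T : Finset β) : #(univ.filter (f · ∈ T)) = 2 * #T := by
  rw [card_eq_sum_card_fiberwise (s := univ.filter (f · ∈ T)) (t := T)
      fun a ha => (mem_filter.mp ha).2,
    sum_congr rfl fun b hb => by rw [filter_filter_mem_of_mem hb, hf], sum_const, smul_eq_mul,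
    mul_comm]

theorem image_filter_mem (T : Finset β) : (univ.filter (f · ∈ T)).image f = T := by
  ext b
  simp only [mem_image, mem_filter, mem_univ, true_and]
  constructor
  · rintro ⟨a, ha, rfl⟩
    exact ha
  · intro hb
    obtain ⟨a, ha⟩ := card_pos.mp (hf b ▸ two_pos : 0 < #(univ.filter (f · = b)))
    exact ⟨a, (mem_filter.mp ha).2 ▸ hb, (mem_filter.mp ha).2⟩

theorem evenFibers_filter_mem (T : Finset β) : EvenFibers f (univ.filter (f · ∈ T)) := by
  intro b
  by_cases hb : b ∈ T
  · rw [filter_filter_mem_of_mem hb, hf b]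
    exact even_two
  · rw [filter_filter, filter_false_of_mem fun a _ ⟨ha, hab⟩ => hb (hab ▸ ha), card_empty]
    exact Even.zero

theorem EvenFibers.filter_eq {S : Finset α} (hS : EvenFibers f S) {a : α} (ha : a ∈ S) :
    S.filter (f · = f a) = univ.filter (f · = f a) := by
  have hsub : S.filter (f · = f a) ⊆ univ.filter (f · = f a) :=
    filter_subset_filter _ (subset_univ S)
  have hpos : 0 < #(S.filter (f · = f a)) := card_pos.mpr ⟨a, mem_filter.mpr ⟨ha, rfl⟩⟩
  have hle : #(S.filter (f · = f a)) ≤ 2 := hf (f a) ▸ card_le_card hsub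
  obtain ⟨k, hk⟩ := hS (f a)
  exact eq_of_subset_of_card_le hsub (by rw [hf]; omega)

theorem EvenFibers.filter_mem_image {S : Finset α} (hS : EvenFibers f S) :
    univ.filter (f · ∈ S.image f) = S := by
  ext a
  simp only [mem_filter, mem_univ, true_and, mem_image]
  refine ⟨fun ⟨a', ha', hfa⟩ => ?_, fun ha => ⟨a, ha, rfl⟩⟩
  have : a ∈ S.filter (f · = f a') := by
    rw [hS.filter_eq hf ha', mem_filter]
    exact ⟨mem_univ a, hfa.symm⟩
  exact (mem_filter.mp this).1

theorem card_filter_card_eq_and_evenFibers [Fintype β] [DecidableEq α] (lam : ℕ) :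
    #(univ.filter fun S : Finset α => #S = lam ∧ EvenFibers f S)
      = if Even lam then (Fintype.card β).choose (lam / 2) else 0 := by
  split_ifs with hlam
  · rw [← card_univ, ← card_powersetCard]
    refine card_nbij' (image f) (fun T => univ.filter (f · ∈ T)) ?_ ?_ ?_ ?_
    · intro S hS
      obtain ⟨hcard, hS⟩ := mem_filter.mp hS |>.2
      have := card_filter_mem hf (S.image f)
      rw [hS.filter_mem_image hf] at this
      rw [mem_coe, mem_powersetCard]
      exact ⟨subset_univ _, by omega⟩
    · intro T hT
      have hT : #T = lam / 2 := (mem_powersetCard.mp hT).2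
      rw [mem_coe, mem_filter]
      refine ⟨mem_univ _, ?_⟩
      refine ⟨?_, evenFibers_filter_mem hf T⟩
      rw [card_filter_mem hf, hT]
      exact Nat.two_mul_div_two_of_even hlam
    · intro S hS
      exact (mem_filter.mp hS).2.2.filter_mem_image hf
    · intro T _
      exact image_filter_mem hf T
  · rw [card_eq_zero, filter_eq_empty_iff]
    rintro S - ⟨rfl, hS⟩
    exact hlam hS.even_card

end TwoToOne

section JordanWigner

open Finset

variable {n : ℕ}

def qubitOf (m : Fin (2 * n)) : Fin n := ⟨m / 2, by omega⟩

theorem card_filter_qubitOf_eq (q : Fin n) : #(univ.filter (qubitOf · = q)) = 2 := by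
  have : univ.filter (qubitOf · = q) = {⟨2 * q, by omega⟩, ⟨2 * q + 1, by omega⟩} := by
    ext m
    simp only [mem_filter, mem_univ, true_and, mem_insert, mem_singleton, qubitOf, Fin.ext_iff]
    omega
  rw [this, card_pair (by simp [Fin.ext_iff])]

def majoranaLabel (m : Fin (2 * n)) (q : Fin n) : Fin 4 :=
  if (q : ℕ) < (m : ℕ) / 2 then 3
  else if (q : ℕ) = (m : ℕ) / 2 then (if (m : ℕ) % 2 = 0 then 1 else 2)
  else 0

theorem majorana_eq_piKronecker (m : Fin (2 * n)) :
    majorana n m = piKronecker fun q => pauli (majoranaLabel m q) := rfl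

theorem pauliFlip_majoranaLabel (m : Fin (2 * n)) (q : Fin n) :
    pauliFlip (majoranaLabel m q) = if qubitOf m = q then 1 else 0 := by
  have : qubitOf m = q ↔ (q : ℕ) = m / 2 := by
    simp only [qubitOf, Fin.ext_iff]; omega
  simp only [this, majoranaLabel, pauliFlip]
  split_ifs <;> first | rfl | omega

theorem majProd_apply_zero_zero (S : Finset (Fin (2 * n))) :
    majProd n S 0 0
      = ∏ q, (((S.sort (· ≤ ·)).map fun m => majoranaLabel m q).map pauli).prod 0 0 := by
  rw [majProd, show majorana n = _ from funext majorana_eq_piKronecker, list_prod_map_piKronecker]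
  simp only [List.map_map]
  rfl

open Fin.CommRing in
theorem sum_sort_map_pauliFlip_majoranaLabel_eq_zero_iff (S : Finset (Fin (2 * n))) (q : Fin n) :
    ((S.sort (· ≤ ·)).map fun m => pauliFlip (majoranaLabel m q)).sum = 0
      ↔ Even #(S.filter (qubitOf · = q)) := by
  rw [← Multiset.sum_coe, ← Multiset.map_coe, Finset.sort_eq, ← Finset.sum_eq_multiset_sum]
  simp only [pauliFlip_majoranaLabel]
  rw [Finset.sum_boole, Fin.natCast_eq_zero, even_iff_two_dvd]

theorem normSq_majProd_apply_zero_zero (S : Finset (Fin (2 * n))) :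
    Complex.normSq (majProd n S 0 0) = if EvenFibers qubitOf S then 1 else 0 := by
  rw [majProd_apply_zero_zero, map_prod]
  calc _ = ∏ q : Fin n, if Even #(S.filter (qubitOf · = q)) then (1 : ℝ) else 0 :=
        Fintype.prod_congr _ _ fun q => ?_
    _ = _ := by rw [Fintype.prod_boole]; congr
  rw [normSq_list_prod_map_pauli_apply_zero_zero, List.map_map, Function.comp_def]
  exact if_congr (sum_sort_map_pauliFlip_majoranaLabel_eq_zero_iff S q) rfl rfl

end JordanWigner

section GaussianityPurity

open Finset

theorem trace_mul_zeroProj {n : ℕ} (A : Matrix (Fin n → Fin 2) (Fin n → Fin 2) ℂ) :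
    (A * zeroProj n).trace = A 0 0 := by
  simp [trace, mul_apply, zeroProj, Pi.zero_def, ite_and, Finset.sum_ite_eq']

theorem normSq_inv_sqrt_two_pow (n : ℕ) :
    Complex.normSq (((Real.sqrt (2 ^ n) : ℝ)⁻¹ : ℂ)) = ((2 : ℝ) ^ n)⁻¹ := by
  rw [map_inv₀, Complex.normSq_ofReal, Real.mul_self_sqrt (by positivity)]

theorem PpurF_zeroProj_eq_card_div (n lam : ℕ) :
    PpurF n lam (zeroProj n)
      = #(univ.filter fun S : Finset (Fin (2 * n)) =>
          #S = lam ∧ EvenFibers qubitOf S) / 2 ^ n := by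
  rw [PpurF, ← filter_filter, ← sum_boole, div_eq_inv_mul, mul_sum]
  refine sum_congr rfl fun S _ => ?_
  rw [smul_mul, trace_smul, trace_mul_zeroProj, smul_eq_mul, map_mul, normSq_inv_sqrt_two_pow,
    normSq_majProd_apply_zero_zero]

theorem PpurF_zeroProj (n lam : ℕ) :
    PpurF n lam (zeroProj n) = (if Even lam then (n.choose (lam / 2) : ℝ) else 0) / 2 ^ n := by
  rw [PpurF_zeroProj_eq_card_div, card_filter_card_eq_and_evenFibers card_filter_qubitOf_eq,
    Fintype.card_fin]
  split_ifs <;> simp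

end GaussianityPurity

theorem stmt11_general (n : ℕ) (lam : ℕ) :
    (Even lam →
      PpurF n lam (zeroProj n) / (Nat.choose (2 * n) lam : ℝ)
        = (Nat.choose n (lam / 2) : ℝ) / ((Nat.choose (2 * n) lam : ℝ) * 2 ^ n)) ∧
    (¬ Even lam → PpurF n lam (zeroProj n) = 0) := by
  refine ⟨fun he => ?_, fun ho => ?_⟩
  · rw [PpurF_zeroProj, if_pos he, div_div, mul_comm]
  · rw [PpurF_zeroProj, if_neg ho, zero_div]

theorem stmt11 (n : ℕ) (lam : ℕ) (hlam : lam ≤ 2 * n) :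
    (Even lam →
      PpurF n lam (zeroProj n) / (Nat.choose (2 * n) lam : ℝ)
        = (Nat.choose n (lam / 2) : ℝ) / ((Nat.choose (2 * n) lam : ℝ) * 2 ^ n)) ∧
    (¬ Even lam → PpurF n lam (zeroProj n) = 0) :=
  stmt11_general n lam
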